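/- arXiv:2303.11843 — 6 statements merged into one kernel-verified Lean document; each statement's English description precedes it below -/
import Mathlib

section
/- Let ε > 0, let (X,d) be a metric space, P ⊆ X a finite nonempty set, r > 0, and k ≥ 1 an integer. Suppose I is a maximal independent set of the r-threshold graph of P with |I| ≤ k, and that the (r/(1+ε/2))-threshold graph of P contains an independent set of size k+1. Then max_{p ∈ P} min_{c ∈ I} d(p,c) ≤ r and r ≤ (2+ε)·OPT_k(P); in particular the k-center cost of I on P is at most (2+ε)·OPT_k(P). -/
/-- The `k`-center cost of a nonempty finite set `C` of centers on a nonempty finite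
set `P` of points: `max_{p ∈ P} min_{c ∈ C} d(p,c)`. -/
noncomputable def kCenterCost {X : Type*} [MetricSpace X] (P C : Finset X)
    (hP : P.Nonempty) (hC : C.Nonempty) : ℝ :=
  P.sup' hP fun p => C.inf' hC fun c => dist p c

/-- The optimal `k`-center cost of `P`: the infimum of the `k`-center cost over all
nonempty finite sets `C ⊆ X` with `|C| ≤ k`. -/
noncomputable def kCenterOpt {X : Type*} [MetricSpace X] (P : Finset X)
    (hP : P.Nonempty) (k : ℕ) : ℝ :=
  sInf {v : ℝ | ∃ (C : Finset X) (hC : C.Nonempty),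
    C.card ≤ k ∧ v = kCenterCost P C hP hC}

/-!
A maximal independent set `I` of the `r`-threshold graph dominates `P` within distance `r`,
so its cost is at most `r`. For the lower bound, any `k` centers must serve two of the `k + 1`
points of `J`, which are more than `δ = r / (1 + ε/2)` apart, from a common center; by the
triangle inequality that center is more than `δ / 2` away from one of them. Hence
`δ ≤ 2 · OPT_k(P)`, i.e. `r ≤ (2 + ε) · OPT_k(P)`.
-/

section KCenter

variable {X : Type*} [MetricSpace X] {P C : Finset X} (hP : P.Nonempty) (hC : C.Nonempty)

theorem kCenterCost_le {t : ℝ} (h : ∀ p ∈ P, ∃ c ∈ C, dist p c ≤ t) :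
    kCenterCost P C hP hC ≤ t := by
  refine Finset.sup'_le _ _ fun p hp => ?_
  obtain ⟨c, hc, hpc⟩ := h p hp
  exact (Finset.inf'_le _ hc).trans hpc

theorem exists_dist_le_kCenterCost {p : X} (hp : p ∈ P) :
    ∃ c ∈ C, dist p c ≤ kCenterCost P C hP hC := by
  obtain ⟨c, hc, hpc⟩ := Finset.exists_mem_eq_inf' hC (dist p ·)
  exact ⟨c, hc, hpc ▸ Finset.le_sup' (fun p => C.inf' hC (dist p ·)) hp⟩

theorem kCenterCost_le_of_dominating {r : ℝ} (hr : 0 ≤ r)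
    (hdom : ∀ p ∈ P, p ∉ C → ∃ c ∈ C, dist p c ≤ r) : kCenterCost P C hP hC ≤ r := by
  refine kCenterCost_le hP hC fun p hp => ?_
  by_cases hpC : p ∈ C
  · exact ⟨p, hpC, by simpa using hr⟩
  · exact hdom p hp hpC

theorem lt_two_mul_kCenterCost_of_separated {J : Finset X} {δ : ℝ} (hJP : J ⊆ P)
    (hcard : C.card < J.card) (hJ : ∀ x ∈ J, ∀ y ∈ J, x ≠ y → δ < dist x y) :
    δ < 2 * kCenterCost P C hP hC := by
  choose! f hfC hfd using fun x (hx : x ∈ J) => exists_dist_le_kCenterCost hP hC (hJP hx)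
  obtain ⟨x, hx, y, hy, hxy, hfxy⟩ :=
    Finset.exists_ne_map_eq_of_card_lt_of_maps_to hcard hfC
  calc δ < dist x y := hJ x hx y hy hxy
    _ ≤ dist x (f x) + dist y (f y) := by
        rw [hfxy]; exact dist_triangle_right x y (f y)
    _ ≤ 2 * kCenterCost P C hP hC := by linarith [hfd x hx, hfd y hy]

theorem le_two_mul_kCenterOpt_of_separated {k : ℕ} (hk : 1 ≤ k) {J : Finset X} {δ : ℝ}
    (hJP : J ⊆ P) (hJcard : J.card = k + 1)
    (hJ : ∀ x ∈ J, ∀ y ∈ J, x ≠ y → δ < dist x y) : δ ≤ 2 * kCenterOpt P hP k := by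
  have hne : {v : ℝ | ∃ (C : Finset X) (hC : C.Nonempty),
      C.card ≤ k ∧ v = kCenterCost P C hP hC}.Nonempty :=
    ⟨_, {hP.choose}, Finset.singleton_nonempty _, by simpa using hk, rfl⟩
  have hhalf : δ / 2 ≤ kCenterOpt P hP k := by
    refine le_csInf hne ?_
    rintro _ ⟨C, hC, hCk, rfl⟩
    linarith [lt_two_mul_kCenterCost_of_separated hP hC hJP (by omega) hJ]
  linarith

end KCenter

theorem stmt_2_general {X : Type*} [MetricSpace X] (ε : ℝ) (hε : 0 < ε)
    (P : Finset X) (hP : P.Nonempty) (r : ℝ) (hr : 0 < r) (k : ℕ)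
    (I : Finset X)
    (hmax : ∀ p ∈ P, p ∉ I → ∃ c ∈ I, dist p c ≤ r)
    (hIcard : I.card ≤ k)
    (J : Finset X) (hJP : J ⊆ P) (hJcard : J.card = k + 1)
    (hJindep : ∀ x ∈ J, ∀ y ∈ J, x ≠ y → r / (1 + ε / 2) < dist x y) :
    ∃ hIne : I.Nonempty,
      kCenterCost P I hP hIne ≤ r ∧
      r ≤ (2 + ε) * kCenterOpt P hP k ∧
      kCenterCost P I hP hIne ≤ (2 + ε) * kCenterOpt P hP k := by
  have hIne : I.Nonempty := by
    obtain ⟨p, hp⟩ := hP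
    by_cases hpI : p ∈ I
    · exact ⟨p, hpI⟩
    · obtain ⟨c, hc, -⟩ := hmax p hp hpI
      exact ⟨c, hc⟩
  have hk : 1 ≤ k := hIne.card_pos.trans_le hIcard
  have hcost := kCenterCost_le_of_dominating hP hIne hr.le hmax
  have hsep := le_two_mul_kCenterOpt_of_separated hP hk hJP hJcard hJindep
  have hopt : r ≤ (2 + ε) * kCenterOpt P hP k := by
    rw [div_le_iff₀ (by positivity)] at hsep
    linarith
  exact ⟨hIne, hcost, hopt, hcost.trans hopt⟩

/-- Suppose `I` is a maximal independent set of the `r`-threshold graph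
of `P` with `|I| ≤ k` (independence: distinct points of `I` are at distance `> r`;
maximality: every point of `P` outside `I` has a point of `I` within distance `r`),
and the `(r/(1+ε/2))`-threshold graph of `P` contains an independent set `J` of size
`k+1` (i.e. `k+1` points of `P` with pairwise distances `> r/(1+ε/2)`). Then the
`k`-center cost of `I` on `P` is at most `r`, and `r ≤ (2+ε) · OPT_k(P)`; in
particular the `k`-center cost of `I` on `P` is at most `(2+ε) · OPT_k(P)`. -/
theorem stmt_2 {X : Type*} [MetricSpace X] (ε : ℝ) (hε : 0 < ε)
    (P : Finset X) (hP : P.Nonempty) (r : ℝ) (hr : 0 < r) (k : ℕ) (hk : 1 ≤ k)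
    (I : Finset X) (hIP : I ⊆ P)
    (hindep : ∀ x ∈ I, ∀ y ∈ I, x ≠ y → r < dist x y)
    (hmax : ∀ p ∈ P, p ∉ I → ∃ c ∈ I, dist p c ≤ r)
    (hIcard : I.card ≤ k)
    (J : Finset X) (hJP : J ⊆ P) (hJcard : J.card = k + 1)
    (hJindep : ∀ x ∈ J, ∀ y ∈ J, x ≠ y → r / (1 + ε / 2) < dist x y) :
    ∃ hIne : I.Nonempty,
      kCenterCost P I hP hIne ≤ r ∧
      r ≤ (2 + ε) * kCenterOpt P hP k ∧
      kCenterCost P I hP hIne ≤ (2 + ε) * kCenterOpt P hP k :=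
  stmt_2_general ε hε P hP r hr k I hmax hIcard J hJP hJcard hJindep
end

section
/- Let (X,d) be a metric space, P ⊆ X finite, k ≥ 1 an integer, and r > 0. Let C' ⊆ X with 1 ≤ |C'| ≤ k be such that max_{p ∈ P} min_{c ∈ C'} d(p,c) ≤ r/2, and let H be the simple graph on C' joining distinct x, y when d(x,y) ≤ 2r. Suppose C ⊆ X is a nonempty set such that for every p ∈ P there exist q ∈ C and c_p, c_q ∈ C' with d(p,c_p) ≤ r/2, d(q,c_q) ≤ r/2, and c_p and c_q in the same connected component of H. Then max_{p ∈ P} min_{c ∈ C} d(p,c) ≤ 2kr. -/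
/-!
The centers `c_p` and `c_q` are joined in `H` by a path, which has at most `|C'| - 1 ≤ k - 1`
edges of length at most `2r` each. Hence `d(p, q) ≤ r/2 + 2r(k - 1) + r/2 ≤ 2kr`.
-/

def closeGraph {X : Type*} [MetricSpace X] (C' : Finset X) (r : ℝ) :
    SimpleGraph {x // x ∈ C'} where
  Adj x y := x ≠ y ∧ dist (x : X) (y : X) ≤ 2 * r
  symm := by
    constructor
    intro x y hxy
    exact ⟨hxy.1.symm, by rw [dist_comm]; exact hxy.2⟩
  loopless := by
    constructor
    intro x hx
    exact hx.1 rfl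

section WalkDist

variable {V X : Type*} [PseudoMetricSpace X] {G : SimpleGraph V} {f : V → X} {D : ℝ}

theorem dist_le_mul_length_of_walk (hf : ∀ u v, G.Adj u v → dist (f u) (f v) ≤ D) {u v : V}
    (w : G.Walk u v) : dist (f u) (f v) ≤ D * w.length := by
  induction w with
  | nil => simp
  | @cons a b c hab w ih =>
    calc dist (f a) (f c) ≤ dist (f a) (f b) + dist (f b) (f c) := dist_triangle _ _ _
      _ ≤ D + D * w.length := add_le_add (hf a b hab) ih
      _ = D * (SimpleGraph.Walk.cons hab w).length := by
          rw [SimpleGraph.Walk.length_cons]; push_cast; ring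

theorem dist_le_mul_card_sub_one_of_reachable [Fintype V] (hD : 0 ≤ D)
    (hf : ∀ u v, G.Adj u v → dist (f u) (f v) ≤ D) {u v : V} (h : G.Reachable u v) :
    dist (f u) (f v) ≤ D * (Fintype.card V - 1) := by
  classical
  obtain ⟨w⟩ := h
  have hlen : (w.bypass.length : ℝ) + 1 ≤ Fintype.card V := by
    exact_mod_cast w.bypass_isPath.length_lt
  calc dist (f u) (f v) ≤ D * w.bypass.length := dist_le_mul_length_of_walk hf w.bypass
    _ ≤ D * (Fintype.card V - 1) := by gcongr; linarith

end WalkDist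

theorem closeGraph_reachable_dist_le {X : Type*} [MetricSpace X] {C' : Finset X} {r : ℝ}
    (hr : 0 ≤ r) {x y : {x // x ∈ C'}} (h : (closeGraph C' r).Reachable x y) :
    dist (x : X) y ≤ 2 * r * (C'.card - 1) := by
  simpa only [Fintype.card_coe] using
    dist_le_mul_card_sub_one_of_reachable (G := closeGraph C' r) (f := Subtype.val)
      (by positivity) (fun _ _ hxy => hxy.2) h

theorem stmt_6_general {X : Type*} [MetricSpace X] (P : Finset X) (k : ℕ)
    (r : ℝ) (hr : 0 < r) (C' : Finset X) (hC'hi : C'.card ≤ k)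
    (C : Set X)
    (hrep : ∀ p ∈ P, ∃ q ∈ C, ∃ cp cq : {x // x ∈ C'},
        dist p (cp : X) ≤ r / 2 ∧ dist q (cq : X) ≤ r / 2 ∧
        (closeGraph C' r).Reachable cp cq) :
    ∀ p ∈ P, ∃ c ∈ C, dist p c ≤ 2 * k * r := by
  intro p hp
  obtain ⟨q, hq, cp, cq, hpc, hqc, hreach⟩ := hrep p hp
  have hcc := closeGraph_reachable_dist_le hr.le hreach
  have hcard : (C'.card : ℝ) ≤ k := by exact_mod_cast hC'hi
  refine ⟨q, hq, ?_⟩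
  calc dist p q ≤ dist p cp + dist (cp : X) cq + dist (cq : X) q := dist_triangle4 _ _ _ _
    _ ≤ r / 2 + 2 * r * (C'.card - 1) + r / 2 := by rw [dist_comm (cq : X)]; gcongr
    _ ≤ 2 * k * r := by nlinarith

/-- Let `C'` be a set of at most `k` (and at least one) centers whose
`k`-center cost on the finite set `P` is at most `r/2`, and let `H` be the graph on
`C'` joining distinct centers at distance at most `2r`. If `C` is a nonempty set such
that every `p ∈ P` has a representative `q ∈ C` lying in its super cluster — i.e.
there are `c_p, c_q ∈ C'` with `d(p,c_p) ≤ r/2`, `d(q,c_q) ≤ r/2`, and `c_p, c_q` in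
the same connected component of `H` — then the `k`-center cost of `C` on `P` is at
most `2kr`, i.e. `max_{p ∈ P} min_{c ∈ C} d(p,c) ≤ 2kr`. -/
theorem stmt_6 {X : Type*} [MetricSpace X] (P : Finset X) (k : ℕ) (hk : 1 ≤ k)
    (r : ℝ) (hr : 0 < r) (C' : Finset X) (hC'lo : 1 ≤ C'.card) (hC'hi : C'.card ≤ k)
    (hcover : ∀ p ∈ P, ∃ c ∈ C', dist p c ≤ r / 2)
    (C : Set X) (hC : C.Nonempty)
    (hrep : ∀ p ∈ P, ∃ q ∈ C, ∃ cp cq : {x // x ∈ C'},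
        dist p (cp : X) ≤ r / 2 ∧ dist q (cq : X) ≤ r / 2 ∧
        (closeGraph C' r).Reachable cp cq) :
    ∀ p ∈ P, ∃ c ∈ C, dist p c ≤ 2 * k * r :=
  stmt_6_general P k r hr C' hC'hi C hrep
end

section
/- Let (X,d) be a metric space, P ⊆ X a finite set, z ≥ 0, and y : P → ℝ with y_p ≥ 0 for all p. Let S̄ be a finite set of pairs (p,r) with p ∈ P and r > 0 such that: (i) for every (p,r) ∈ S̄, Σ_{p' ∈ P, d(p,p') ≤ r/3} y_{p'} ≥ r/6 + z; and (ii) for distinct pairs (p,r), (p',r') ∈ S̄, the sets {q ∈ P : d(p,q) ≤ r/3} and {q ∈ P : d(p',q) ≤ r'/3} are disjoint. Then Σ_{(p,r) ∈ S̄} (r + z) ≤ 6 · Σ_{p ∈ P} y_p. -/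
open Finset
open scoped Classical

/-! Each pair `(p, r)` of `S̄` is paid for by the dual mass in its ball of radius `r/3`, which is at
least `r/6 + z ≥ (r + z)/6`. The balls are disjoint and the duals nonnegative, so these masses add up
to at most the total dual mass `Σ_{p ∈ P} y_p`. -/

theorem Finset.sum_sum_filter_le_sum_of_pairwiseDisjoint {ι α M : Type*} [AddCommMonoid M]
    [PartialOrder M] [IsOrderedAddMonoid M] (S : Finset ι) (P : Finset α) (B : ι → α → Prop)
    (f : α → M) (hf : ∀ p ∈ P, 0 ≤ f p)
    (hdisj : (S : Set ι).PairwiseDisjoint fun i => P.filter (B i)) :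
    ∑ i ∈ S, ∑ p ∈ P.filter (B i), f p ≤ ∑ p ∈ P, f p := by
  rw [← sum_biUnion hdisj]
  exact sum_le_sum_of_subset_of_nonneg (biUnion_subset.2 fun _ _ => filter_subset _ _)
    fun p hp _ => hf p hp

theorem stmt_7_general {X : Type*} [MetricSpace X] (P : Finset X) (z : ℝ) (hz : 0 ≤ z)
    (y : X → ℝ) (hy : ∀ p ∈ P, 0 ≤ y p)
    (Sbar : Finset (X × ℝ))
    (htight : ∀ s ∈ Sbar,
      s.2 / 6 + z ≤ ∑ p' ∈ P.filter (fun p' => dist s.1 p' ≤ s.2 / 3), y p')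
    (hdisj : ∀ s ∈ Sbar, ∀ s' ∈ Sbar, s ≠ s' →
      ∀ q ∈ P, ¬(dist s.1 q ≤ s.2 / 3 ∧ dist s'.1 q ≤ s'.2 / 3)) :
    ∑ s ∈ Sbar, (s.2 + z) ≤ 6 * ∑ p ∈ P, y p := by
  have hballs : (Sbar : Set (X × ℝ)).PairwiseDisjoint
      fun s => P.filter fun q => dist s.1 q ≤ s.2 / 3 := fun s hs s' hs' hne =>
    disjoint_filter.2 fun q hq h h' => hdisj s hs s' hs' hne q hq ⟨h, h'⟩
  calc ∑ s ∈ Sbar, (s.2 + z)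
      ≤ ∑ s ∈ Sbar, 6 * ∑ p' ∈ P.filter (fun p' => dist s.1 p' ≤ s.2 / 3), y p' :=
        sum_le_sum fun s hs => by linarith [htight s hs]
    _ = 6 * ∑ s ∈ Sbar, ∑ p' ∈ P.filter (fun p' => dist s.1 p' ≤ s.2 / 3), y p' :=
        (mul_sum ..).symm
    _ ≤ 6 * ∑ p ∈ P, y p := by
        gcongr
        exact sum_sum_filter_le_sum_of_pairwiseDisjoint Sbar P _ y hy hballs

/-- primal-dual cost bound core: let `y` be nonnegative dual variables
on the finite point set `P`, `z ≥ 0`, and let `S̄` be a finite set of pairs `(p,r)`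
with `p ∈ P` and `r > 0` such that (i) each pair is half-tight at radius `r/3`:
`Σ_{p' ∈ P, d(p,p') ≤ r/3} y_{p'} ≥ r/6 + z`, and (ii) the balls
`{q ∈ P : d(p,q) ≤ r/3}` of distinct pairs are disjoint. Then
`Σ_{(p,r) ∈ S̄} (r + z) ≤ 6 · Σ_{p ∈ P} y_p`. -/
theorem stmt_7 {X : Type*} [MetricSpace X] (P : Finset X) (z : ℝ) (hz : 0 ≤ z)
    (y : X → ℝ) (hy : ∀ p ∈ P, 0 ≤ y p)
    (Sbar : Finset (X × ℝ))
    (hSmem : ∀ s ∈ Sbar, s.1 ∈ P ∧ 0 < s.2)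
    (htight : ∀ s ∈ Sbar,
      s.2 / 6 + z ≤ ∑ p' ∈ P.filter (fun p' => dist s.1 p' ≤ s.2 / 3), y p')
    (hdisj : ∀ s ∈ Sbar, ∀ s' ∈ Sbar, s ≠ s' →
      ∀ q ∈ P, ¬(dist s.1 q ≤ s.2 / 3 ∧ dist s'.1 q ≤ s'.2 / 3)) :
    ∑ s ∈ Sbar, (s.2 + z) ≤ 6 * ∑ p ∈ P, y p :=
  stmt_7_general P z hz y hy Sbar htight hdisj
end

section
/- Let X be a nonempty finite set and let A, B be nonempty subsets of X. If π is drawn uniformly at random from the bijections X → {1, …, |X|}, and argmin_S π denotes the unique element of S minimizing π, then the probability that argmin_{a ∈ A} π(a) = argmin_{b ∈ B} π(b) equals |A ∩ B| / |A ∪ B|. -/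
/-!
The minimum of `π` over `A ∪ B` is the minimum over `A` and over `B` exactly when it lies in
`A ∩ B`; otherwise the two minima differ. Composing `π` with the transposition of two points
of `A ∪ B` swaps the events "the minimum over `A ∪ B` is attained at `x`" and "… at `y`",
so the minimum over `A ∪ B` is uniformly distributed on `A ∪ B`, and it lands in `A ∩ B`
with probability `|A ∩ B| / |A ∪ B|`.
-/

def finArgmin {X : Type*} [Fintype X] [DecidableEq X]
    (π : X ≃ Fin (Fintype.card X)) (A : Finset X) (hA : A.Nonempty) : X :=
  π.symm ((A.image fun a => π a).min' (hA.image fun a => π a))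

open Finset

lemma Finset.card_filter_mem_eq_card_mul {ι κ : Type*} [DecidableEq κ] {s : Finset ι}
    {t : Finset κ} {g : ι → κ} {n : ℕ} (h : ∀ j ∈ t, #{i ∈ s | g i = j} = n) :
    #{i ∈ s | g i ∈ t} = #t * n := by
  rw [← sum_card_fiberwise_eq_card_filter, sum_const_nat h]

section finArgmin

variable {X : Type*} [Fintype X] [DecidableEq X] (π : X ≃ Fin (Fintype.card X))
  {C : Finset X} (hC : C.Nonempty)

lemma finArgmin_mem : finArgmin π C hC ∈ C := by
  obtain ⟨a, ha, hπa⟩ := mem_image.1 ((C.image fun a => π a).min'_mem (hC.image fun a => π a))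
  simpa [finArgmin, ← hπa] using ha

lemma finArgmin_le {a : X} (ha : a ∈ C) : π (finArgmin π C hC) ≤ π a := by
  simpa [finArgmin] using (C.image fun a => π a).min'_le _ (mem_image_of_mem _ ha)

lemma finArgmin_eq_iff {x : X} : finArgmin π C hC = x ↔ x ∈ C ∧ ∀ c ∈ C, π x ≤ π c := by
  refine ⟨?_, fun ⟨hx, hle⟩ => ?_⟩
  · rintro rfl
    exact ⟨finArgmin_mem π hC, fun c hc => finArgmin_le π hC hc⟩
  · exact π.injective (le_antisymm (finArgmin_le π hC hx) (hle _ (finArgmin_mem π hC)))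

lemma finArgmin_perm_trans {σ : Equiv.Perm X} (hσ : ∀ c, σ c ∈ C ↔ c ∈ C) :
    finArgmin (σ.trans π) C hC = σ.symm (finArgmin π C hC) := by
  rw [finArgmin_eq_iff]
  refine ⟨(hσ _).1 (by simpa using finArgmin_mem π hC), fun c hc => ?_⟩
  simpa using finArgmin_le π hC ((hσ c).2 hc)

lemma finArgmin_swap_trans {x y : X} (hx : x ∈ C) (hy : y ∈ C) :
    finArgmin ((Equiv.swap x y).trans π) C hC = Equiv.swap x y (finArgmin π C hC) := by
  refine finArgmin_perm_trans π hC fun c => ?_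
  rcases eq_or_ne c x with rfl | hcx
  · simp [hx, hy]
  rcases eq_or_ne c y with rfl | hcy
  · simp [hx, hy]
  · rw [Equiv.swap_apply_of_ne_of_ne hcx hcy]

lemma finArgmin_eq_finArgmin_iff {A B : Finset X} (hA : A.Nonempty) (hB : B.Nonempty)
    (hAB : (A ∪ B).Nonempty) :
    finArgmin π A hA = finArgmin π B hB ↔ finArgmin π (A ∪ B) hAB ∈ A ∩ B := by
  set m := finArgmin π (A ∪ B) hAB
  have hm : ∀ {D : Finset X} (hD : D.Nonempty), D ⊆ A ∪ B → m ∈ D → finArgmin π D hD = m :=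
    fun hD hsub hmD => (finArgmin_eq_iff π hD).2 ⟨hmD, fun c hc => finArgmin_le π hAB (hsub hc)⟩
  refine ⟨fun h => ?_, fun h => ?_⟩
  · rcases mem_union.1 (finArgmin_mem π hAB) with hmA | hmB
    · have hAm := hm hA subset_union_left hmA
      exact mem_inter.2 ⟨hmA, hAm ▸ h ▸ finArgmin_mem π hB⟩
    · have hBm := hm hB subset_union_right hmB
      exact mem_inter.2 ⟨hBm ▸ h.symm ▸ finArgmin_mem π hA, hmB⟩
  · rw [hm hA subset_union_left (mem_inter.1 h).1, hm hB subset_union_right (mem_inter.1 h).2]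

variable (C) in
lemma card_filter_finArgmin_eq_eq {x y : X} (hx : x ∈ C) (hy : y ∈ C) :
    #{π : X ≃ Fin (Fintype.card X) | finArgmin π C hC = x} =
      #{π : X ≃ Fin (Fintype.card X) | finArgmin π C hC = y} := by
  refine card_nbij' (fun π => (Equiv.swap x y).trans π) (fun π => (Equiv.swap x y).trans π)
    ?_ ?_ (fun π _ => by ext; simp) (fun π _ => by ext; simp)
  all_goals
    intro π hπ
    simp_all [finArgmin_swap_trans π hC hx hy]

end finArgmin

theorem stmt_9_general {X : Type*} [Fintype X] [DecidableEq X]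
    (A B : Finset X) (hA : A.Nonempty) (hB : B.Nonempty) :
    ((Finset.univ.filter fun π : X ≃ Fin (Fintype.card X) =>
        finArgmin π A hA = finArgmin π B hB).card : ℝ) /
      (Fintype.card (X ≃ Fin (Fintype.card X)) : ℝ)
      = ((A ∩ B).card : ℝ) / ((A ∪ B).card : ℝ) := by
  have hAB : (A ∪ B).Nonempty := hA.mono subset_union_left
  obtain ⟨x₀, hx₀⟩ := id hAB
  set n := #{π : X ≃ Fin (Fintype.card X) | finArgmin π (A ∪ B) hAB = x₀}
  have hfiber : ∀ x ∈ A ∪ B, #{π : X ≃ Fin (Fintype.card X) | finArgmin π (A ∪ B) hAB = x} = n :=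
    fun x hx => card_filter_finArgmin_eq_eq (A ∪ B) hAB hx hx₀
  have hnum : #{π : X ≃ Fin (Fintype.card X) | finArgmin π A hA = finArgmin π B hB} =
      #(A ∩ B) * n := by
    rw [filter_congr fun π _ => finArgmin_eq_finArgmin_iff π hA hB hAB]
    exact card_filter_mem_eq_card_mul fun x hx => hfiber x (inter_subset_union hx)
  have htotal : Fintype.card (X ≃ Fin (Fintype.card X)) = #(A ∪ B) * n := by
    rw [← card_univ, ← filter_true_of_mem (s := univ) fun π _ => finArgmin_mem π hAB]
    exact card_filter_mem_eq_card_mul hfiber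
  have hn : (n : ℝ) ≠ 0 := by
    have : 0 < Fintype.card (X ≃ Fin (Fintype.card X)) :=
      Fintype.card_pos_iff.2 ⟨Fintype.equivFin X⟩
    rw [htotal] at this
    exact_mod_cast (Nat.pos_of_mul_pos_left this).ne'
  rw [hnum, htotal]
  push_cast
  exact mul_div_mul_right _ _ hn

/-- MinHash collision probability: for nonempty subsets `A, B` of a
nonempty finite set `X`, if `π` is a uniformly random bijection `X → {1,…,|X|}`, the
probability that the `π`-minimizer of `A` equals the `π`-minimizer of `B` is exactly
`|A ∩ B| / |A ∪ B|`. -/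
theorem stmt_9 {X : Type*} [Fintype X] [DecidableEq X] [Nonempty X]
    (A B : Finset X) (hA : A.Nonempty) (hB : B.Nonempty) :
    ((Finset.univ.filter fun π : X ≃ Fin (Fintype.card X) =>
        finArgmin π A hA = finArgmin π B hB).card : ℝ) /
      (Fintype.card (X ≃ Fin (Fintype.card X)) : ℝ)
      = ((A ∩ B).card : ℝ) / ((A ∪ B).card : ℝ) :=
  stmt_9_general A B hA hB
end

section
/- Let (X,d) be a metric space, P ⊆ X a finite set with |P| = n ≥ 2, r > 0, c ≥ 1, and 0 < p₂ ≤ p₁ < 1. Let μ be a probability measure on functions h : X → U such that for all x, y ∈ X: if d(x,y) ≤ r then μ{h : h(x) = h(y)} ≥ p₁, and if d(x,y) > c·r then μ{h : h(x) = h(y)} ≤ p₂. Set t = ⌈2·ln n / ln(1/p₂)⌉, ρ = ln(1/p₁)/ln(1/p₂), and let δ ∈ (0,1/2) and s ≥ ln(n²/δ)·n^{2ρ}/p₁ be an integer. Draw s·t i.i.d. functions h_{i,j} ~ μ (i ∈ [s], j ∈ [t]) and say a pair x, y ∈ P collides in block i if h_{i,j}(x) = h_{i,j}(y) for all j ∈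 [t]. Then: (a) for each fixed i and each pair x, y ∈ P with d(x,y) > c·r, the probability that x and y collide in block i is at most p₂^t ≤ 1/n², so the expected number of such far pairs colliding in block i is less than 1; and (b) with probability at least 1 − δ, every pair x, y ∈ P with d(x,y) ≤ r collides in at least one block. -/
/-!
Concatenating `t` independent hash functions turns the collision probabilities `p₁, p₂` into
`p₁ ^ t, p₂ ^ t`. The choice `t = ⌈log n² / log (1/p₂)⌉` gives `p₂ ^ t ≤ 1/n²`, so the
expected number of far pairs colliding in one block is at most `n(n-1)/n² < 1`, while
`t ≤ log n² / log (1/p₂) + 1` gives `p₁ ^ t ≥ p₁ n^{-2ρ}`. A close pair therefore misses all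
`s` independent blocks with probability `(1 - p₁ ^ t) ^ s ≤ exp (-s p₁ ^ t) ≤ δ/n²`, and a union
bound over the at most `n²` close pairs finishes the proof.
-/

open MeasureTheory Finset
open scoped ENNReal

namespace Real

theorem pow_ceil_log_div_log_inv_le {p a : ℝ} (hp₀ : 0 < p) (hp₁ : p < 1) (ha : 0 < a) :
    p ^ ⌈log a / log (1 / p)⌉₊ ≤ a⁻¹ := by
  have hL : 0 < log (1 / p) := log_pos ((one_lt_div hp₀).2 hp₁)
  have ht : log a ≤ ⌈log a / log (1 / p)⌉₊ * log (1 / p) := (div_le_iff₀ hL).1 (Nat.le_ceil _)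
  have hinv : a⁻¹ = exp (-log a) := by rw [exp_neg, exp_log ha]
  rw [one_div, log_inv] at ht ⊢
  rw [hinv, ← rpow_natCast, rpow_def_of_pos hp₀, exp_le_exp]
  linarith

theorem mul_rpow_neg_le_pow_ceil {p q a : ℝ} (hp₀ : 0 < p) (hp₁ : p ≤ 1) (hq₀ : 0 < q)
    (hq₁ : q < 1) (ha : 1 ≤ a) :
    p * a ^ (-(log (1 / p) / log (1 / q))) ≤ p ^ ⌈log a / log (1 / q)⌉₊ := by
  have hL : 0 < log (1 / q) := log_pos ((one_lt_div hq₀).2 hq₁)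
  have hx : 0 ≤ log a / log (1 / q) := div_nonneg (log_nonneg ha) hL.le
  have hpx : p ^ (log a / log (1 / q)) = a ^ (-(log (1 / p) / log (1 / q))) := by
    rw [rpow_def_of_pos hp₀, rpow_def_of_pos (by linarith), one_div p, log_inv]
    ring_nf
  calc p * a ^ (-(log (1 / p) / log (1 / q))) = p ^ (log a / log (1 / q) + 1) := by
        rw [rpow_add_one hp₀.ne', hpx, mul_comm]
    _ ≤ p ^ (⌈log a / log (1 / q)⌉₊ : ℝ) :=
        rpow_le_rpow_of_exponent_ge hp₀ hp₁ (Nat.ceil_lt_add_one hx).le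
    _ = p ^ ⌈log a / log (1 / q)⌉₊ := rpow_natCast p _

theorem one_sub_pow_le_inv_of_log_le {x A : ℝ} {s : ℕ} (hx : x ≤ 1) (hA : 0 < A)
    (h : log A ≤ s * x) : (1 - x) ^ s ≤ A⁻¹ :=
  calc (1 - x) ^ s ≤ exp (-x) ^ s := pow_le_pow_left₀ (sub_nonneg.2 hx) (one_sub_le_exp_neg x) s
    _ = exp (-(s * x)) := by rw [← exp_nat_mul, mul_neg]
    _ ≤ exp (-log A) := exp_le_exp.2 (neg_le_neg h)
    _ = A⁻¹ := by rw [exp_neg, exp_log hA]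

theorem one_sub_pow_ceil_pow_le_div {p₁ p₂ a δ : ℝ} {s : ℕ} (hp₁₀ : 0 < p₁) (hp₁ : p₁ ≤ 1)
    (hp₂₀ : 0 < p₂) (hp₂ : p₂ < 1) (ha : 1 ≤ a) (hδ : 0 < δ)
    (hs : log (a / δ) * a ^ (log (1 / p₁) / log (1 / p₂)) / p₁ ≤ s) :
    (1 - p₁ ^ ⌈log a / log (1 / p₂)⌉₊) ^ s ≤ δ / a := by
  have hq := mul_rpow_neg_le_pow_ceil hp₁₀ hp₁ hp₂₀ hp₂ ha
  have hlog : log (a / δ) ≤ s * p₁ ^ ⌈log a / log (1 / p₂)⌉₊ :=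
    calc log (a / δ) = log (a / δ) * a ^ (log (1 / p₁) / log (1 / p₂)) / p₁
          * (p₁ * a ^ (-(log (1 / p₁) / log (1 / p₂)))) := by
          rw [rpow_neg (by linarith)]; field_simp
      _ ≤ s * p₁ ^ ⌈log a / log (1 / p₂)⌉₊ :=
          mul_le_mul hs hq (by positivity) (Nat.cast_nonneg s)
  rw [← inv_div a δ]
  exact one_sub_pow_le_inv_of_log_le (pow_le_one₀ hp₁₀.le hp₁) (by positivity) hlog

end Real

theorem Finset.sum_sum_lt_one_of_le_inv_card_sq {α : Type*} {P : Finset α}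
    (hP : P.Nonempty) {f : α → α → ℝ≥0∞} (hdiag : ∀ x ∈ P, f x x = 0)
    (hle : ∀ x ∈ P, ∀ y ∈ P, f x y ≤ ((#P : ℝ≥0∞) ^ 2)⁻¹) :
    ∑ x ∈ P, ∑ y ∈ P, f x y < 1 := by
  classical
  have hrow : ∀ x ∈ P, ∑ y ∈ P, f x y ≤ (#P - 1) • ((#P : ℝ≥0∞) ^ 2)⁻¹ := fun x hx => by
    rw [← sum_erase P (hdiag x hx), ← card_erase_of_mem hx]
    exact sum_le_card_nsmul _ _ _ fun y hy => hle x hx y (mem_of_mem_erase hy)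
  have hlt : #P * (#P - 1) < #P ^ 2 := by
    rw [sq]; exact Nat.mul_lt_mul_of_pos_left (Nat.sub_lt hP.card_pos one_pos) hP.card_pos
  calc ∑ x ∈ P, ∑ y ∈ P, f x y ≤ #P • ((#P - 1) • ((#P : ℝ≥0∞) ^ 2)⁻¹) :=
        sum_le_card_nsmul _ _ _ hrow
    _ = ((#P * (#P - 1) : ℕ) : ℝ≥0∞) / ((#P ^ 2 : ℕ) : ℝ≥0∞) := by
        rw [smul_smul, nsmul_eq_mul, div_eq_mul_inv, Nat.cast_pow]
    _ < 1 := by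
        rw [ENNReal.div_lt_iff (by simp [hP.ne_empty]) (by simp), one_mul]
        exact_mod_cast hlt

namespace MeasureTheory

theorem one_sub_card_mul_le_measure_forall_mem {Ω ι : Type*} [MeasurableSpace Ω]
    (ν : Measure Ω) [IsProbabilityMeasure ν] (S : Finset ι) (E : ι → Set Ω) {ε : ℝ≥0∞}
    (h : ∀ i ∈ S, ν (E i)ᶜ ≤ ε) :
    1 - #S * ε ≤ ν {ω | ∀ i ∈ S, ω ∈ E i} := by
  set G := {ω | ∀ i ∈ S, ω ∈ E i}
  have hGc : ν Gᶜ ≤ #S * ε :=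
    calc ν Gᶜ = ν (⋃ i ∈ S, (E i)ᶜ) := by congr 1; ext; simp [G]
      _ ≤ ∑ i ∈ S, ν (E i)ᶜ := measure_biUnion_finset_le S _
      _ ≤ ∑ _ ∈ S, ε := sum_le_sum h
      _ = #S * ε := by rw [sum_const, nsmul_eq_mul]
  calc 1 - #S * ε ≤ 1 - ν Gᶜ := tsub_le_tsub_left hGc 1
    _ ≤ ν G := tsub_le_iff_right.2 (by simpa using measure_univ_le_add_compl (μ := ν) G)

namespace Measure

variable {ι κ H : Type*} [Fintype ι] [Fintype κ] [MeasurableSpace H]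
  (μ : Measure H) [IsProbabilityMeasure μ]

theorem pi_prod_preimage_curry (S : Set (ι → κ → H)) :
    Measure.pi (fun _ : ι × κ => μ) (Function.curry ⁻¹' S)
      = Measure.pi (fun _ : ι => Measure.pi fun _ : κ => μ) S := by
  simp_rw [← infinitePi_eq_pi, ← infinitePi_map_curry (fun (_ : ι) (_ : κ) => μ),
    MeasurableEquiv.map_apply]
  rfl

theorem pi_univ_pi_const (A : Set H) :
    Measure.pi (fun _ : κ => μ) (Set.univ.pi fun _ => A) = μ A ^ Fintype.card κ := by
  rw [pi_pi, Finset.prod_const, Finset.card_univ]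

theorem pi_prod_setOf_forall_mem_block {A : Set H} (hA : MeasurableSet A) (i : ι) :
    Measure.pi (fun _ : ι × κ => μ) {ω | ∀ j, ω (i, j) ∈ A} = μ A ^ Fintype.card κ := by
  have hblock : MeasurableSet (Set.univ.pi fun _ : κ => A) :=
    MeasurableSet.univ_pi fun _ => hA
  rw [← pi_univ_pi_const μ A, ← (measurePreserving_eval (fun _ : ι => _) i).measure_preimage
    hblock.nullMeasurableSet, ← pi_prod_preimage_curry]
  congr 1
  ext ω
  simp

theorem pi_prod_setOf_forall_exists_not_mem_block {A : Set H} (hA : MeasurableSet A) :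
    Measure.pi (fun _ : ι × κ => μ) {ω | ∀ i, ∃ j, ω (i, j) ∉ A}
      = (1 - μ A ^ Fintype.card κ) ^ Fintype.card ι := by
  have hblock : MeasurableSet (Set.univ.pi fun _ : κ => A) :=
    MeasurableSet.univ_pi fun _ => hA
  rw [← pi_univ_pi_const μ A, ← prob_compl_eq_one_sub hblock, ← Finset.card_univ,
    ← Finset.prod_const, ← pi_pi, ← pi_prod_preimage_curry]
  congr 1
  ext ω
  simp

theorem pi_prod_setOf_forall_mem_block_le {A : Set H} (hA : MeasurableSet A) (i : ι) {p : ℝ}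
    (hp : 0 ≤ p) (hpA : μ A ≤ ENNReal.ofReal p) :
    Measure.pi (fun _ : ι × κ => μ) {ω | ∀ j, ω (i, j) ∈ A}
      ≤ ENNReal.ofReal (p ^ Fintype.card κ) := by
  rw [pi_prod_setOf_forall_mem_block μ hA, ENNReal.ofReal_pow hp]
  exact pow_le_pow_left' hpA _

theorem pi_prod_setOf_forall_exists_not_mem_block_le {A : Set H} (hA : MeasurableSet A) {p : ℝ}
    (hp₀ : 0 ≤ p) (hp₁ : p ≤ 1) (hpA : ENNReal.ofReal p ≤ μ A) :
    Measure.pi (fun _ : ι × κ => μ) {ω | ∀ i, ∃ j, ω (i, j) ∉ A}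
      ≤ ENNReal.ofReal ((1 - p ^ Fintype.card κ) ^ Fintype.card ι) := by
  rw [pi_prod_setOf_forall_exists_not_mem_block μ hA,
    ENNReal.ofReal_pow (sub_nonneg.2 (pow_le_one₀ hp₀ hp₁)),
    ENNReal.ofReal_sub _ (pow_nonneg hp₀ _), ENNReal.ofReal_one, ENNReal.ofReal_pow hp₀]
  gcongr

theorem sum_sum_ite_pi_prod_setOf_forall_mem_block_lt_one {α : Type*} {P : Finset α}
    (hP : P.Nonempty) (Q : α → α → Prop) [DecidableRel Q] (hQ : ∀ x, ¬Q x x)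
    {A : α → α → Set H} (hA : ∀ x y, MeasurableSet (A x y)) {p : ℝ} (hp : 0 ≤ p)
    (hpA : ∀ x y, Q x y → μ (A x y) ≤ ENNReal.ofReal p)
    (hpκ : p ^ Fintype.card κ ≤ 1 / (#P : ℝ) ^ 2) (i : ι) :
    ∑ x ∈ P, ∑ y ∈ P, (if Q x y then
      Measure.pi (fun _ : ι × κ => μ) {ω | ∀ j, ω (i, j) ∈ A x y} else 0) < 1 := by
  refine sum_sum_lt_one_of_le_inv_card_sq hP (fun x _ => if_neg (hQ x)) fun x _ y _ => ?_
  split_ifs with hxy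
  · calc _ ≤ ENNReal.ofReal (p ^ Fintype.card κ) :=
          pi_prod_setOf_forall_mem_block_le μ (hA x y) i hp (hpA x y hxy)
      _ ≤ ENNReal.ofReal (1 / (#P : ℝ) ^ 2) := ENNReal.ofReal_le_ofReal hpκ
      _ = ((#P : ℝ≥0∞) ^ 2)⁻¹ := by
          rw [one_div, ENNReal.ofReal_inv_of_pos (by positivity [hP.card_pos]),
            ENNReal.ofReal_pow (Nat.cast_nonneg _), ENNReal.ofReal_natCast]
  · exact zero_le

theorem ofReal_one_sub_le_pi_prod_forall_exists_block {α : Type*} (P : Finset α)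
    (Q : α → α → Prop) {A : α → α → Set H} (hA : ∀ x y, MeasurableSet (A x y)) {p : ℝ}
    (hp₀ : 0 ≤ p) (hp₁ : p ≤ 1) (hpA : ∀ x y, Q x y → ENNReal.ofReal p ≤ μ (A x y)) {ε : ℝ}
    (hε : 0 ≤ ε) (hpε : #P ^ 2 * (1 - p ^ Fintype.card κ) ^ Fintype.card ι ≤ ε) :
    ENNReal.ofReal (1 - ε)
      ≤ Measure.pi (fun _ : ι × κ => μ)
          {ω | ∀ x ∈ P, ∀ y ∈ P, Q x y → ∃ i, ∀ j, ω (i, j) ∈ A x y} := by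
  classical
  set S := (P ×ˢ P).filter fun q => Q q.1 q.2
  set q := (1 - p ^ Fintype.card κ) ^ Fintype.card ι
  have hS : #S ≤ #P ^ 2 := (card_filter_le _ _).trans (by rw [card_product, sq])
  have hSq : #S * ENNReal.ofReal q ≤ ENNReal.ofReal ε := by
    rw [← ENNReal.ofReal_natCast, ← ENNReal.ofReal_mul (Nat.cast_nonneg _)]
    refine ENNReal.ofReal_le_ofReal (le_trans ?_ hpε)
    gcongr
    · exact pow_nonneg (sub_nonneg.2 (pow_le_one₀ hp₀ hp₁)) _
    · exact_mod_cast hS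
  calc ENNReal.ofReal (1 - ε) = 1 - ENNReal.ofReal ε := by
        rw [ENNReal.ofReal_sub _ hε, ENNReal.ofReal_one]
    _ ≤ 1 - #S * ENNReal.ofReal q := tsub_le_tsub_left hSq 1
    _ ≤ Measure.pi (fun _ : ι × κ => μ)
          {ω | ∀ q ∈ S, ω ∈ {ω | ∃ i, ∀ j, ω (i, j) ∈ A q.1 q.2}} :=
        one_sub_card_mul_le_measure_forall_mem _ S _ fun q hq => by
          simpa [Set.compl_ofPred] using pi_prod_setOf_forall_exists_not_mem_block_le μ (hA _ _)
            hp₀ hp₁ (hpA _ _ (mem_filter.1 hq).2)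
    _ = _ := by
        congr 1
        ext ω
        simpa [S] using ⟨fun h x hx y hy => h x y hx hy, fun h x y hx hy => h x hx y hy⟩

end Measure

end MeasureTheory

theorem stmt_11_general {X U : Type*} [MetricSpace X] [MeasurableSpace U]
    (P : Finset X) (n : ℕ) (hcard : P.card = n) (hn : 2 ≤ n)
    (r : ℝ) (hr : 0 < r) (c : ℝ) (hc : 1 ≤ c)
    (p₁ p₂ : ℝ) (hp₂pos : 0 < p₂) (hp₂₁ : p₂ ≤ p₁) (hp₁lt : p₁ < 1)
    (μ : Measure (X → U)) [IsProbabilityMeasure μ]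
    (hmeas : ∀ x y : X, MeasurableSet {h : X → U | h x = h y})
    (hclose : ∀ x y : X, dist x y ≤ r →
      ENNReal.ofReal p₁ ≤ μ {h : X → U | h x = h y})
    (hfar : ∀ x y : X, c * r < dist x y →
      μ {h : X → U | h x = h y} ≤ ENNReal.ofReal p₂)
    (t : ℕ) (ht : t = ⌈2 * Real.log n / Real.log (1 / p₂)⌉₊)
    (ρ : ℝ) (hρ : ρ = Real.log (1 / p₁) / Real.log (1 / p₂))
    (δ : ℝ) (hδ0 : 0 < δ)
    (s : ℕ) (hs : Real.log ((n : ℝ) ^ 2 / δ) * (n : ℝ) ^ (2 * ρ) / p₁ ≤ (s : ℝ)) :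
    (∀ i : Fin s, ∀ x ∈ P, ∀ y ∈ P, c * r < dist x y →
        (Measure.pi fun _ : Fin s × Fin t => μ)
            {ω : Fin s × Fin t → X → U | ∀ j : Fin t, ω (i, j) x = ω (i, j) y}
          ≤ ENNReal.ofReal (p₂ ^ t)
        ∧ p₂ ^ t ≤ 1 / (n : ℝ) ^ 2) ∧
    (∀ i : Fin s,
        (∑ x ∈ P, ∑ y ∈ P,
          if c * r < dist x y then
            (Measure.pi fun _ : Fin s × Fin t => μ)
              {ω : Fin s × Fin t → X → U | ∀ j : Fin t, ω (i, j) x = ω (i, j) y}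
          else 0) < 1) ∧
    ENNReal.ofReal (1 - δ) ≤
      (Measure.pi fun _ : Fin s × Fin t => μ)
        {ω : Fin s × Fin t → X → U | ∀ x ∈ P, ∀ y ∈ P, dist x y ≤ r →
          ∃ i : Fin s, ∀ j : Fin t, ω (i, j) x = ω (i, j) y} := by
  have hp₁ : 0 < p₁ := hp₂pos.trans_le hp₂₁
  have hn₂ : (1 : ℝ) ≤ (n : ℝ) ^ 2 := one_le_pow₀ (by exact_mod_cast (by omega : 1 ≤ n))
  have hlog : 2 * Real.log n = Real.log ((n : ℝ) ^ 2) := by rw [Real.log_pow]; push_cast; ring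
  rw [hlog] at ht
  rw [hρ, Real.rpow_mul (Nat.cast_nonneg n), Real.rpow_two] at hs
  have hfar_t : p₂ ^ t ≤ 1 / (n : ℝ) ^ 2 := by
    rw [ht, one_div ((n : ℝ) ^ 2)]
    exact Real.pow_ceil_log_div_log_inv_le hp₂pos (hp₂₁.trans_lt hp₁lt) (by positivity)
  have hclose_t : (1 - p₁ ^ t) ^ s ≤ δ / (n : ℝ) ^ 2 := by
    rw [ht]
    exact Real.one_sub_pow_ceil_pow_le_div hp₁ hp₁lt.le hp₂pos (hp₂₁.trans_lt hp₁lt) hn₂ hδ0 hs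
  refine ⟨fun i x _ y _ hxy => ⟨?_, hfar_t⟩, fun i => ?_, ?_⟩
  · simpa using Measure.pi_prod_setOf_forall_mem_block_le (κ := Fin t) μ (hmeas x y) i
      hp₂pos.le (hfar x y hxy)
  · have hdiag (x : X) : ¬c * r < dist x x := by
      rw [dist_self, not_lt]
      exact mul_nonneg (by linarith) hr.le
    simpa using Measure.sum_sum_ite_pi_prod_setOf_forall_mem_block_lt_one (κ := Fin t) μ
      (card_pos.1 (by omega)) _ hdiag hmeas hp₂pos.le hfar (by simpa [hcard] using hfar_t) i
  · refine Measure.ofReal_one_sub_le_pi_prod_forall_exists_block (ι := Fin s) (κ := Fin t) μ P _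
      hmeas hp₁.le hp₁lt.le hclose hδ0.le ?_
    rw [Fintype.card_fin, Fintype.card_fin, hcard, ← le_div_iff₀' (by positivity)]
    exact hclose_t

/-- Let `μ` be an `(r, cr, p₁, p₂)`-sensitive family of hash functions
`X → U` (a probability measure on functions: points at distance `≤ r` collide with
probability `≥ p₁`, points at distance `> cr` collide with probability `≤ p₂`), with
`0 < p₂ ≤ p₁ < 1`. Set `t = ⌈2 ln n / ln(1/p₂)⌉`, `ρ = ln(1/p₁)/ln(1/p₂)`, and let
`δ ∈ (0,1/2)` and `s ≥ ln(n²/δ)·n^{2ρ}/p₁`. Draw `s·t` i.i.d. hash functions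
`ω (i,j)` (the product measure `Measure.pi`), and say `x, y` collide in block `i` if
`ω (i,j) x = ω (i,j) y` for all `j`. Then:
(a) for each block `i` and each pair `x, y ∈ P` with `d(x,y) > c·r`, the probability
that `x,y` collide in block `i` is at most `p₂^t ≤ 1/n²`, and the expected number of
far pairs colliding in block `i` is less than `1`;
(b) with probability at least `1 − δ`, every pair `x, y ∈ P` with `d(x,y) ≤ r`
collides in at least one block. -/
theorem stmt_11 {X U : Type*} [MetricSpace X] [MeasurableSpace U]
    (P : Finset X) (n : ℕ) (hcard : P.card = n) (hn : 2 ≤ n)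
    (r : ℝ) (hr : 0 < r) (c : ℝ) (hc : 1 ≤ c)
    (p₁ p₂ : ℝ) (hp₂pos : 0 < p₂) (hp₂₁ : p₂ ≤ p₁) (hp₁lt : p₁ < 1)
    (μ : Measure (X → U)) [IsProbabilityMeasure μ]
    (hmeas : ∀ x y : X, MeasurableSet {h : X → U | h x = h y})
    (hclose : ∀ x y : X, dist x y ≤ r →
      ENNReal.ofReal p₁ ≤ μ {h : X → U | h x = h y})
    (hfar : ∀ x y : X, c * r < dist x y →
      μ {h : X → U | h x = h y} ≤ ENNReal.ofReal p₂)
    (t : ℕ) (ht : t = ⌈2 * Real.log n / Real.log (1 / p₂)⌉₊)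
    (ρ : ℝ) (hρ : ρ = Real.log (1 / p₁) / Real.log (1 / p₂))
    (δ : ℝ) (hδ0 : 0 < δ) (hδhalf : δ < 1 / 2)
    (s : ℕ) (hs : Real.log ((n : ℝ) ^ 2 / δ) * (n : ℝ) ^ (2 * ρ) / p₁ ≤ (s : ℝ)) :
    (∀ i : Fin s, ∀ x ∈ P, ∀ y ∈ P, c * r < dist x y →
        (Measure.pi fun _ : Fin s × Fin t => μ)
            {ω : Fin s × Fin t → X → U | ∀ j : Fin t, ω (i, j) x = ω (i, j) y}
          ≤ ENNReal.ofReal (p₂ ^ t)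
        ∧ p₂ ^ t ≤ 1 / (n : ℝ) ^ 2) ∧
    (∀ i : Fin s,
        (∑ x ∈ P, ∑ y ∈ P,
          if c * r < dist x y then
            (Measure.pi fun _ : Fin s × Fin t => μ)
              {ω : Fin s × Fin t → X → U | ∀ j : Fin t, ω (i, j) x = ω (i, j) y}
          else 0) < 1) ∧
    ENNReal.ofReal (1 - δ) ≤
      (Measure.pi fun _ : Fin s × Fin t => μ)
        {ω : Fin s × Fin t → X → U | ∀ x ∈ P, ∀ y ∈ P, dist x y ≤ r →
          ∃ i : Fin s, ∀ j : Fin t, ω (i, j) x = ω (i, j) y} :=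
  stmt_11_general P n hcard hn r hr c hc p₁ p₂ hp₂pos hp₂₁ hp₁lt μ hmeas hclose hfar t ht ρ hρ δ hδ0
    s hs
end

section
/- Let (X,d) be a metric space, P ⊆ X a finite set, z ≥ 0, and y : P → ℝ with y_p ≥ 0 for all p ∈ P. Suppose that for every p ∈ P with y_p > 0 and every r > 0, Σ_{p' ∈ P, d(p,p') ≤ 2r} y_{p'} ≤ r + z. Then for every q ∈ P and every r > 0, Σ_{p' ∈ P, d(q,p') ≤ r} y_{p'} ≤ r + z. -/
open Finset
open scoped Classical

/-
If some point `p` of the ball `B(q, r)` carries positive weight, then `B(q, r) ⊆ B(p, 2r)`, so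
nonnegativity of `y` and the half-tightness bound at `p` give the constraint at `(q, r)`.
Otherwise the sum over `B(q, r)` is at most `0 ≤ r + z`.
-/

theorem filter_dist_le_subset_filter_dist_le {X : Type*} [PseudoMetricSpace X] (P : Finset X)
    {p q : X} {r s : ℝ} (h : dist p q + r ≤ s) :
    P.filter (fun x => dist q x ≤ r) ⊆ P.filter (fun x => dist p x ≤ s) :=
  monotone_filter_right P fun x _ hx =>
    (dist_triangle p q x).trans ((add_le_add_right hx _).trans h)

theorem sum_filter_dist_le_le_of_dist_le {X : Type*} [PseudoMetricSpace X] (P : Finset X)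
    (y : X → ℝ) (hy : ∀ p ∈ P, 0 ≤ y p) {p q : X} {r s : ℝ} (h : dist p q + r ≤ s) :
    ∑ x ∈ P.filter (fun x => dist q x ≤ r), y x ≤ ∑ x ∈ P.filter (fun x => dist p x ≤ s), y x :=
  sum_le_sum_of_subset_of_nonneg (filter_dist_le_subset_filter_dist_le P h)
    fun x hx _ => hy x (mem_filter.mp hx).1

/-- half-tightness implies dual feasibility: let `y` be nonnegative
dual variables on the finite point set `P` and `z ≥ 0`. If for every support point
`p ∈ P` (i.e. `y_p > 0`) and every `r > 0` we have
`Σ_{p' ∈ P, d(p,p') ≤ 2r} y_{p'} ≤ r + z` (no constraint is more than half-tight at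
any support point), then every dual constraint holds: for every `q ∈ P` and `r > 0`,
`Σ_{p' ∈ P, d(q,p') ≤ r} y_{p'} ≤ r + z`. -/
theorem stmt_19 {X : Type*} [MetricSpace X] (P : Finset X) (z : ℝ) (hz : 0 ≤ z)
    (y : X → ℝ) (hy : ∀ p ∈ P, 0 ≤ y p)
    (hhalf : ∀ p ∈ P, 0 < y p → ∀ r : ℝ, 0 < r →
      ∑ p' ∈ P.filter (fun p' => dist p p' ≤ 2 * r), y p' ≤ r + z) :
    ∀ q ∈ P, ∀ r : ℝ, 0 < r →
      ∑ p' ∈ P.filter (fun p' => dist q p' ≤ r), y p' ≤ r + z := by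
  intro q _ r hr
  by_cases hsupp : ∃ p ∈ P.filter (fun p' => dist q p' ≤ r), 0 < y p
  · obtain ⟨p, hp, hyp⟩ := hsupp
    obtain ⟨hpP, hpq⟩ := mem_filter.mp hp
    have hdist : dist p q + r ≤ 2 * r := by rw [dist_comm]; linarith
    exact (sum_filter_dist_le_le_of_dist_le P y hy hdist).trans (hhalf p hpP hyp r hr)
  · push Not at hsupp
    have hnonpos := sum_nonpos hsupp
    linarith
end
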